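/- Let G be a finite simple graph and F a uniform random c-coloring of its n vertices. For a color i, the variance of the number L^i of i-isolated vertices equals E[L^i](1 - E[L^i]) + (c_i^{\underline{2}}/n^{\underline{2}}) Σ_{(u,v): u ≠ v, uv ∉ E(G)} (n - c_i)^{\underline{b(u,v)}} / (n - 2)^{\underline{b(u,v)}}, where b(u,v) = |N_G(u) ∪ N_G(v)| and the sum is over ordered pairs of distinct non-adjacent vertices. -/

import Mathlib

/-!
Expanding `L² = L + #{(u, v) : u ≠ v both i-isolated}` reduces the variance to the probability
that two distinct vertices `u, v` are both `i`-isolated. This is impossible for adjacent `u, v`;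
otherwise it says that the colour class `T` of `i` contains `{u, v}` and avoids
`N(u) ∪ N(v)`. Precomposing colorings with a permutation of `V` shows that `T` is a uniformly
random `cᵢ`-subset, and for disjoint `A`, `B` of sizes `a`, `b` a uniform `k`-subset of an
`n`-set contains `A` and avoids `B` with probability `k^(a) (n-k)^(b) / n^(a+b)` (falling
factorials); with `a = 2` and `n^(2+b) = n^(2) (n-2)^(b)` this is the summand of the theorem.
-/

/-- The set of `c`-colorings of `V`. -/
def colorings (V : Type) [Fintype V] [DecidableEq V] (s : ℕ) (c : Fin s → ℕ) :
    Finset (V → Fin s) :=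
  Finset.univ.filter fun f =>
    ∀ i, (Finset.univ.filter fun v => f v = i).card = c i

/-- `L^i f` : the number of `i`-isolated vertices under coloring `f`. -/
def isolatedCount (V : Type) [Fintype V] [DecidableEq V] (G : SimpleGraph V)
    [DecidableRel G.Adj] (s : ℕ) (i : Fin s) (f : V → Fin s) : ℕ :=
  (Finset.univ.filter fun v =>
    f v = i ∧ ∀ w ∈ G.neighborFinset v, f w ≠ i).card

open Finset

open Nat in
theorem Nat.choose_sub_mul_descFactorial_add {n k a b : ℕ} (hak : a ≤ k) :
    (n - (a + b)).choose (k - a) * n.descFactorial (a + b) =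
      n.choose k * (k.descFactorial a * (n - k).descFactorial b) := by
  obtain hkb | hkb := le_or_gt (k + b) n
  · obtain ⟨j, rfl⟩ := Nat.exists_eq_add_of_le hak
    obtain ⟨r, rfl⟩ := Nat.exists_eq_add_of_le hkb
    have h1 : a + j + b + r - (a + b) = j + r := by omega
    have h2 : a + j + b + r - (a + j) = b + r := by omega
    rw [h1, h2, Nat.add_sub_cancel_left]
    apply Nat.eq_of_mul_eq_mul_right (Nat.mul_pos j.factorial_pos r.factorial_pos)
    calc (j + r).choose j * (a + j + b + r).descFactorial (a + b) * (j ! * r !)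
        = (j + r)! * (a + j + b + r).descFactorial (a + b) := by
          rw [← Nat.choose_mul_factorial_mul_factorial (Nat.le_add_right j r),
            Nat.add_sub_cancel_left]
          ring
      _ = (a + j + b + r)! := by
        rw [← h1]
        exact Nat.factorial_mul_descFactorial (by omega)
      _ = (a + j + b + r).choose (a + j) * (a + j)! * (b + r)! := by
        rw [← h2, Nat.choose_mul_factorial_mul_factorial (by omega)]
      _ = _ := by
        rw [← Nat.factorial_mul_descFactorial (show a ≤ a + j by omega),
          ← Nat.factorial_mul_descFactorial (show b ≤ b + r by omega)]
        simp only [Nat.add_sub_cancel_left]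
        ring
  · trans 0 <;>
      simp only [mul_eq_zero, zero_eq_mul, Nat.choose_eq_zero_iff,
        Nat.descFactorial_eq_zero_iff_lt] <;>
      omega

section Finsets

variable {V : Type} [Fintype V] [DecidableEq V]

theorem card_powersetCard_filter_subset_disjoint {A B : Finset V} (hAB : Disjoint A B) {k : ℕ}
    (hk : #A ≤ k) :
    #{T ∈ powersetCard k univ | A ⊆ T ∧ Disjoint T B} =
      (Fintype.card V - (#A + #B)).choose (k - #A) := by
  rw [← card_univ, ← card_union_of_disjoint hAB, ← card_sdiff_of_subset (subset_univ _),
    ← card_powersetCard]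
  refine card_nbij' (· \ A) (· ∪ A) ?_ ?_ ?_ ?_
  · intro T hT
    simp only [mem_coe, mem_filter, mem_powersetCard] at hT ⊢
    obtain ⟨⟨-, hTk⟩, hAT, hTB⟩ := hT
    refine ⟨?_, by rw [card_sdiff_of_subset hAT, hTk]⟩
    intro x
    simp only [mem_sdiff, mem_union, mem_univ, true_and]
    exact fun ⟨hxT, hxA⟩ h => h.elim hxA (disjoint_left.1 hTB hxT)
  · intro U hU
    simp only [mem_coe, mem_filter, mem_powersetCard, subset_sdiff,
      disjoint_union_left] at hU ⊢
    obtain ⟨⟨-, hUAB⟩, hUk⟩ := hU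
    refine ⟨⟨subset_univ _, ?_⟩, subset_union_right, ?_, hAB⟩
    · rw [card_union_of_disjoint (disjoint_union_right.1 hUAB).1]
      omega
    · exact (disjoint_union_right.1 hUAB).2
  · intro T hT
    simp only [mem_coe, mem_filter, mem_powersetCard] at hT
    exact sdiff_union_of_subset hT.2.1
  · intro U hU
    simp only [mem_coe, mem_powersetCard, subset_sdiff, disjoint_union_right] at hU
    exact union_sdiff_cancel_right hU.1.2.1

theorem card_powersetCard_filter_subset_disjoint_mul {A B : Finset V} (hAB : Disjoint A B)
    (k : ℕ) :
    #{T ∈ powersetCard k univ | A ⊆ T ∧ Disjoint T B} *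
        (Fintype.card V).descFactorial (#A + #B) =
      (Fintype.card V).choose k *
        (k.descFactorial #A * (Fintype.card V - k).descFactorial #B) := by
  obtain hk | hk := le_or_gt #A k
  · rw [card_powersetCard_filter_subset_disjoint hAB hk]
    exact Nat.choose_sub_mul_descFactorial_add hk
  · have hempty : (powersetCard k univ).filter (fun T => A ⊆ T ∧ Disjoint T B) = ∅ :=
      filter_eq_empty_iff.2 fun T hT ⟨hAT, _⟩ =>
        hk.not_ge ((mem_powersetCard.1 hT).2 ▸ card_le_card hAT)
    rw [hempty, Nat.descFactorial_eq_zero_iff_lt.2 hk]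
    simp

theorem sum_card_sq_eq_sum_card_add_sum_card_pairs {α : Type*} (F : Finset α)
    (S : α → Finset V) :
    ∑ a ∈ F, #(S a) ^ 2 =
      ∑ a ∈ F, #(S a) +
        ∑ p ∈ (univ : Finset V).offDiag, #{a ∈ F | p.1 ∈ S a ∧ p.2 ∈ S a} := by
  have hsq : ∀ a, #(S a) ^ 2 = #(S a) + #(S a).offDiag := fun a => by
    rw [offDiag_card, sq]
    have := Nat.le_mul_self #(S a)
    omega
  have hoffDiag : ∀ a, (S a).offDiag = (univ : Finset V).offDiag.filter
      (fun p => p.1 ∈ S a ∧ p.2 ∈ S a) := fun a => by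
    ext p
    simp only [mem_offDiag, mem_filter, mem_univ, true_and]
    tauto
  simp_rw [hsq, sum_add_distrib, hoffDiag, card_filter]
  rw [sum_comm]

end Finsets

section Colorings

variable {V : Type} [Fintype V] {s : ℕ}

def colorClass (f : V → Fin s) (i : Fin s) : Finset V := univ.filter fun v => f v = i

theorem map_colorClass_comp (f : V → Fin s) (e : Equiv.Perm V) (i : Fin s) :
    (colorClass (f ∘ e) i).map e.toEmbedding = colorClass f i := by
  ext v
  simp [colorClass, mem_map_equiv]

variable [DecidableEq V] {c : Fin s → ℕ}

theorem mem_colorings_iff {f : V → Fin s} :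
    f ∈ colorings V s c ↔ ∀ j, #(colorClass f j) = c j := by
  simp [colorings, colorClass]

theorem comp_mem_colorings {f : V → Fin s} (e : Equiv.Perm V) (hf : f ∈ colorings V s c) :
    f ∘ e ∈ colorings V s c := by
  rw [mem_colorings_iff] at hf ⊢
  intro j
  rw [← hf j, ← map_colorClass_comp f e, card_map]

theorem card_filter_colorClass_le_of_card_eq (i : Fin s) {S T : Finset V} (hST : #S = #T) :
    #{f ∈ colorings V s c | colorClass f i = S} ≤
      #{f ∈ colorings V s c | colorClass f i = T} := by
  obtain ⟨e, he⟩ := Equiv.Perm.exists_map_finset_eq T S hST.symm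
  refine card_le_card_of_injOn (· ∘ e) (fun f hf => ?_) e.surjective.injective_comp_right.injOn
  rw [mem_coe, mem_filter] at hf ⊢
  refine ⟨comp_mem_colorings e hf.1, ?_⟩
  rw [← map_inj (f := e.toEmbedding), map_colorClass_comp, hf.2, he]

theorem card_filter_colorClass_eq_of_card_eq (i : Fin s) {S T : Finset V} (hST : #S = #T) :
    #{f ∈ colorings V s c | colorClass f i = S} = #{f ∈ colorings V s c | colorClass f i = T} :=
  (card_filter_colorClass_le_of_card_eq i hST).antisymm
    (card_filter_colorClass_le_of_card_eq i hST.symm)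

theorem card_filter_colorClass_mem_eq_mul (Q : Finset V → Prop) [DecidablePred Q] {i : Fin s}
    {S : Finset V} (hS : #S = c i) :
    #{f ∈ colorings V s c | Q (colorClass f i)} =
      #{T ∈ powersetCard (c i) univ | Q T} * #{f ∈ colorings V s c | colorClass f i = S} := by
  have hmaps : ∀ f ∈ (colorings V s c).filter (Q <| colorClass · i),
      colorClass f i ∈ (powersetCard (c i) univ).filter Q := fun f hf => by
    simp only [mem_filter, mem_powersetCard, mem_colorings_iff] at hf ⊢
    exact ⟨⟨subset_univ _, hf.1 i⟩, hf.2⟩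
  rw [card_eq_sum_card_fiberwise hmaps, ← smul_eq_mul, ← sum_const]
  refine sum_congr rfl fun T hT => ?_
  rw [mem_filter, mem_powersetCard] at hT
  rw [filter_filter, ← card_filter_colorClass_eq_of_card_eq i (hT.1.2.trans hS.symm)]
  congr 2
  ext f
  exact ⟨fun h => h.2, fun h => ⟨h ▸ hT.2, h⟩⟩

theorem card_colorings_filter_subset_disjoint_mul {A B : Finset V} (hAB : Disjoint A B)
    (i : Fin s) :
    #{f ∈ colorings V s c | A ⊆ colorClass f i ∧ Disjoint (colorClass f i) B} *
        (Fintype.card V).descFactorial (#A + #B) =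
      #(colorings V s c) *
        ((c i).descFactorial #A * (Fintype.card V - c i).descFactorial #B) := by
  obtain hempty | ⟨f₀, hf₀⟩ := (colorings V s c).eq_empty_or_nonempty
  · simp [hempty]
  have hS := mem_colorings_iff.1 hf₀ i
  have htotal := card_filter_colorClass_mem_eq_mul (fun _ => True) hS
  rw [filter_true_of_mem fun _ _ => trivial, filter_true_of_mem fun _ _ => trivial,
    card_powersetCard, card_univ] at htotal
  rw [card_filter_colorClass_mem_eq_mul (fun T => A ⊆ T ∧ Disjoint T B) hS, htotal,
    mul_right_comm, card_powersetCard_filter_subset_disjoint_mul hAB]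
  ring

theorem colorings_nonempty (hsum : ∑ j, c j = Fintype.card V) : (colorings V s c).Nonempty := by
  let g : V ≃ Σ j : Fin s, Fin (c j) := Fintype.equivOfCardEq (by simp [hsum])
  refine ⟨fun v => (g v).1, mem_colorings_iff.2 fun j => ?_⟩
  have hclass : colorClass (fun v => (g v).1) j =
      (({j} : Finset (Fin s)).sigma fun _ => univ).map g.symm.toEmbedding := by
    ext v
    simp [colorClass, mem_map_equiv]
  simp [hclass]

end Colorings

section Isolated

variable {V : Type} [Fintype V] [DecidableEq V] (G : SimpleGraph V) [DecidableRel G.Adj] {s : ℕ}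

def isolatedSet (i : Fin s) (f : V → Fin s) : Finset V :=
  univ.filter fun v => f v = i ∧ ∀ w ∈ G.neighborFinset v, f w ≠ i

theorem isolatedCount_eq_card_isolatedSet (i : Fin s) (f : V → Fin s) :
    isolatedCount V G s i f = #(isolatedSet G i f) :=
  rfl

theorem mem_isolatedSet_and_mem_isolatedSet_iff {i : Fin s} {f : V → Fin s} {u v : V} :
    u ∈ isolatedSet G i f ∧ v ∈ isolatedSet G i f ↔
      {u, v} ⊆ colorClass f i ∧
        Disjoint (colorClass f i) (G.neighborFinset u ∪ G.neighborFinset v) := by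
  simp only [isolatedSet, colorClass, mem_filter, mem_univ, true_and, insert_subset_iff,
    singleton_subset_iff, disjoint_left]
  constructor
  · rintro ⟨⟨hu, hNu⟩, hv, hNv⟩
    exact ⟨⟨hu, hv⟩, fun w hw hB => (mem_union.1 hB).elim (hNu w · hw) (hNv w · hw)⟩
  · rintro ⟨⟨hu, hv⟩, hB⟩
    exact ⟨⟨hu, fun w hw hfw => hB hfw (mem_union_left _ hw)⟩, hv,
      fun w hw hfw => hB hfw (mem_union_right _ hw)⟩

theorem disjoint_pair_neighborFinset_union {u v : V} (h : ¬ G.Adj u v) :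
    Disjoint {u, v} (G.neighborFinset u ∪ G.neighborFinset v) := by
  simp [h, G.adj_comm v u]

variable {c : Fin s → ℕ}

theorem card_colorings_filter_pair_isolated {u v : V} (huv : u ≠ v) (h : ¬ G.Adj u v)
    (i : Fin s) :
    (#{f ∈ colorings V s c | u ∈ isolatedSet G i f ∧ v ∈ isolatedSet G i f} : ℚ) =
      #(colorings V s c) *
        (((c i).descFactorial 2 : ℚ) / (Fintype.card V).descFactorial 2 *
          (((Fintype.card V - c i).descFactorial
                #(G.neighborFinset u ∪ G.neighborFinset v) : ℚ) /
            (Fintype.card V - 2).descFactorial #(G.neighborFinset u ∪ G.neighborFinset v))) := by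
  set B := G.neighborFinset u ∪ G.neighborFinset v
  have hdisj := disjoint_pair_neighborFinset_union G h
  have hpair : #({u, v} : Finset V) = 2 := card_pair huv
  have hcount := card_colorings_filter_subset_disjoint_mul (c := c) hdisj i
  simp only [← mem_isolatedSet_and_mem_isolatedSet_iff, hpair] at hcount
  have hle : 2 + #B ≤ Fintype.card V := hpair ▸ card_union_of_disjoint hdisj ▸ card_le_univ _
  rw [← Nat.descFactorial_mul_descFactorial (show 2 ≤ 2 + #B by omega), Nat.add_sub_cancel_left]
    at hcount
  have h₁ : ((Fintype.card V - 2).descFactorial #B : ℚ) ≠ 0 := by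
    exact_mod_cast (Nat.descFactorial_pos.2 (by omega)).ne'
  have h₂ : ((Fintype.card V).descFactorial 2 : ℚ) ≠ 0 := by
    exact_mod_cast (Nat.descFactorial_pos.2 (by omega)).ne'
  have hq : (#{f ∈ colorings V s c | u ∈ isolatedSet G i f ∧ v ∈ isolatedSet G i f} : ℚ) *
      ((Fintype.card V - 2).descFactorial #B * (Fintype.card V).descFactorial 2) =
      #(colorings V s c) * ((c i).descFactorial 2 * (Fintype.card V - c i).descFactorial #B) := by
    exact_mod_cast hcount
  field_simp
  linear_combination hq

theorem sum_offDiag_card_colorings_filter_pair_isolated (i : Fin s) :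
    ∑ p ∈ (univ : Finset V).offDiag,
        (#{f ∈ colorings V s c | p.1 ∈ isolatedSet G i f ∧ p.2 ∈ isolatedSet G i f} : ℚ) =
      #(colorings V s c) *
        (((c i).descFactorial 2 : ℚ) / (Fintype.card V).descFactorial 2 *
          ∑ p ∈ (univ : Finset V).offDiag.filter (fun p => ¬ G.Adj p.1 p.2),
            ((Fintype.card V - c i).descFactorial
                #(G.neighborFinset p.1 ∪ G.neighborFinset p.2) : ℚ) /
              (Fintype.card V - 2).descFactorial
                #(G.neighborFinset p.1 ∪ G.neighborFinset p.2)) := by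
  rw [mul_sum, mul_sum,
    ← sum_filter_of_ne (p := fun p : V × V => ¬ G.Adj p.1 p.2) fun p _ hp hadj => hp ?_]
  · refine sum_congr rfl fun p hp => ?_
    obtain ⟨hp, hnadj⟩ := mem_filter.1 hp
    exact card_colorings_filter_pair_isolated G (mem_offDiag.1 hp).2.2 hnadj i
  · rw [Nat.cast_eq_zero, card_eq_zero, filter_eq_empty_iff]
    rintro f - ⟨hu, hv⟩
    exact (mem_filter.1 hu).2.2 p.2 ((G.mem_neighborFinset _ _).2 hadj) (mem_filter.1 hv).2.1

end Isolated

theorem variance_isolated_general (V : Type) [Fintype V] [DecidableEq V]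
    (G : SimpleGraph V) [DecidableRel G.Adj] (n s : ℕ)
    (hn : Fintype.card V = n) (c : Fin s → ℕ)
    (hsum : ∑ i, c i = n) (i : Fin s) (EL : ℚ)
    (hEL : EL = (∑ f ∈ colorings V s c, (isolatedCount V G s i f : ℚ)) /
        ((colorings V s c).card : ℚ)) :
    (∑ f ∈ colorings V s c, (isolatedCount V G s i f : ℚ) ^ 2) /
          ((colorings V s c).card : ℚ) -
        ((∑ f ∈ colorings V s c, (isolatedCount V G s i f : ℚ)) /
          ((colorings V s c).card : ℚ)) ^ 2
      = EL * (1 - EL) +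
          (((c i).descFactorial 2 : ℚ) / (n.descFactorial 2 : ℚ)) *
            ∑ p ∈ (Finset.univ : Finset V).offDiag.filter
                (fun p => ¬ G.Adj p.1 p.2),
              ((n - c i).descFactorial
                  ((G.neighborFinset p.1 ∪ G.neighborFinset p.2).card) : ℚ) /
                ((n - 2).descFactorial
                  ((G.neighborFinset p.1 ∪ G.neighborFinset p.2).card) : ℚ) := by
  subst hn
  have hC : (#(colorings V s c) : ℚ) ≠ 0 := by
    exact_mod_cast (colorings_nonempty hsum).card_pos.ne'
  have hsq := sum_card_sq_eq_sum_card_add_sum_card_pairs (colorings V s c) (isolatedSet G i)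
  rw [← Nat.cast_inj (R := ℚ)] at hsq
  push_cast at hsq
  rw [sum_offDiag_card_colorings_filter_pair_isolated] at hsq
  simp only [hEL, isolatedCount_eq_card_isolatedSet, hsq, add_div, mul_div_cancel_left₀ _ hC]
  ring

/-- Theorem 1.3: under a uniform random `c`-coloring, the variance of the number
`L^i` of `i`-isolated vertices equals
`E[L^i](1 - E[L^i]) + (cᵢ^(2)/n^(2)) Σ_{u ≠ v, uv ∉ E} (n-cᵢ)^(b(u,v))/(n-2)^(b(u,v))`,
where `b(u,v) = |N(u) ∪ N(v)|` and the sum is over ordered pairs of distinct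
non-adjacent vertices. -/
theorem variance_isolated (V : Type) [Fintype V] [DecidableEq V]
    (G : SimpleGraph V) [DecidableRel G.Adj] (n s : ℕ)
    (hn : Fintype.card V = n) (c : Fin s → ℕ) (hpos : ∀ i, 0 < c i)
    (hsum : ∑ i, c i = n) (i : Fin s) (EL : ℚ)
    (hEL : EL = (∑ f ∈ colorings V s c, (isolatedCount V G s i f : ℚ)) /
        ((colorings V s c).card : ℚ)) :
    (∑ f ∈ colorings V s c, (isolatedCount V G s i f : ℚ) ^ 2) /
          ((colorings V s c).card : ℚ) -
        ((∑ f ∈ colorings V s c, (isolatedCount V G s i f : ℚ)) /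
          ((colorings V s c).card : ℚ)) ^ 2
      = EL * (1 - EL) +
          (((c i).descFactorial 2 : ℚ) / (n.descFactorial 2 : ℚ)) *
            ∑ p ∈ (Finset.univ : Finset V).offDiag.filter
                (fun p => ¬ G.Adj p.1 p.2),
              ((n - c i).descFactorial
                  ((G.neighborFinset p.1 ∪ G.neighborFinset p.2).card) : ℚ) /
                ((n - 2).descFactorial
                  ((G.neighborFinset p.1 ∪ G.neighborFinset p.2).card) : ℚ) :=
  variance_isolated_general V G n s hn c hsum i EL hEL
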